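/- arXiv:2309.12473 — 2 statements merged into one kernel-verified Lean document; each statement's English description precedes it below -/
import Mathlib

section
/- For every n ≥ 3, the cycle C_n is a minor of every 2-connected graph containing arbitrarily long paths. -/
open SimpleGraph

/-- `G` contains a path with `n` edges. -/
def HasPathLen {V : Type*} (G : SimpleGraph V) (n : ℕ) : Prop :=
  ∃ (u v : V) (p : G.Walk u v), p.IsPath ∧ p.length = n

/-- `B` is a model of `H` inside `G`. -/
def IsModelOf {V W : Type*} (G : SimpleGraph V) (H : SimpleGraph W) (B : W → Set V) : Prop :=
  (∀ w, (B w).Nonempty) ∧ (∀ w, (G.induce (B w)).Connected) ∧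
  (Pairwise fun w w' => Disjoint (B w) (B w')) ∧
  (∀ ⦃w w'⦄, H.Adj w w' → ∃ u ∈ B w, ∃ v ∈ B w', G.Adj u v)

/-- `H` is a minor of `G`. -/
def IsMinorOf {V W : Type*} (H : SimpleGraph W) (G : SimpleGraph V) : Prop :=
  ∃ B : W → Set V, IsModelOf G H B

/-- `(Tr, 𝒱)` is a tree-decomposition of `G`. -/
structure IsTreeDecomp {V T : Type*} (G : SimpleGraph V) (Tr : SimpleGraph T)
    (𝒱 : T → Set V) : Prop where
  tree : Tr.IsTree
  coverV : ∀ v, ∃ t, v ∈ 𝒱 t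
  coverE : ∀ ⦃u v⦄, G.Adj u v → ∃ t, u ∈ 𝒱 t ∧ v ∈ 𝒱 t
  sep : ∀ ⦃x z : T⦄ (p : Tr.Walk x z), p.IsPath → ∀ y ∈ p.support, 𝒱 x ∩ 𝒱 z ⊆ 𝒱 y

/-- `G` is `k`-connected. -/
def KConnected {V : Type*} (G : SimpleGraph V) (k : ℕ) : Prop :=
  (k < Nat.card V ∨ Infinite V) ∧
  ∀ s : Set V, s.Finite → s.ncard < k → (G.induce sᶜ).Connected

/-!
A 2-connected graph has a cycle through any two vertices: grow one along a walk, rerouting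
through an ear whenever the next vertex is off the current cycle. Take such a cycle `C` through
the ends of a path `P` of length about `N²`. If `C` is short, `P` meets it in fewer than `N`
vertices, so some segment of `P` between consecutive visits to `C` has length at least `N`, and
closing it up with an arc of `C` gives a cycle of length at least `N`. A cycle of length at least
`n` contracts onto `C_n` by merging its last arc into a single branch set.
-/

namespace SimpleGraph

variable {V : Type*} {G : SimpleGraph V}

namespace Walk

lemma exists_eq_append_of_first_mem (S : Set V) {u w : V} (q : G.Walk u w) (hw : w ∈ S) :
    ∃ (x : V) (r : G.Walk u x) (s : G.Walk x w),
      q = r.append s ∧ x ∈ S ∧ ∀ y ∈ r.support, y ∈ S → y = x := by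
  induction q with
  | nil => exact ⟨_, nil, nil, rfl, hw, by simp⟩
  | @cons u v w h q ih =>
    by_cases hu : u ∈ S
    · exact ⟨u, nil, cons h q, rfl, hu, by simp⟩
    obtain ⟨x, r, s, rfl, hx, hr⟩ := ih hw
    refine ⟨x, cons h r, s, rfl, hx, ?_⟩
    intro y hy hyS
    rcases List.mem_cons.mp hy with rfl | hy
    · exact absurd hyS hu
    · exact hr y hy hyS

lemma IsCycle.exists_isPath_mem_support {a x z u : V} {c : G.Walk a a} (hc : c.IsCycle)
    (hx : x ∈ c.support) (hz : z ∈ c.support) (hu : u ∈ c.support) (hxz : x ≠ z) :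
    ∃ A : G.Walk x z, A.IsPath ∧ u ∈ A.support ∧ ∀ y ∈ A.support, y ∈ c.support := by
  classical
  have hc' := hc.rotate hx
  have hsub : ∀ y ∈ (c.rotate x hx).support, y ∈ c.support :=
    fun y => (mem_support_rotate_iff c x hx).mp
  set c' := c.rotate x hx
  have hz' : z ∈ c'.support := (mem_support_rotate_iff c x hx).mpr hz
  have hu' : u ∈ c'.support := (mem_support_rotate_iff c x hx).mpr hu
  have ht : (c'.takeUntil z hz').IsPath := hc'.isPath_takeUntil hz'
  rw [← c'.take_spec hz'] at hc' hu'
  have hd : (c'.dropUntil z hz').IsPath := hc'.isPath_of_append_right (not_nil_of_ne hxz)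
  rcases (mem_support_append_iff _ _).mp hu' with hut | hud
  · exact ⟨_, ht, hut, fun y hy => hsub y (c'.support_takeUntil_subset_support hz' hy)⟩
  · refine ⟨_, hd.reverse, by simpa using hud, fun y hy => hsub y ?_⟩
    exact c'.support_dropUntil_subset_support hz' (by simpa using hy)

lemma IsPath.start_notMem_support_tail {u v : V} {p : G.Walk u v} (hp : p.IsPath) :
    u ∉ p.support.tail := by
  have := hp.support_nodup
  rw [← p.cons_tail_support] at this
  exact (List.nodup_cons.mp this).1

/-- Pigeonhole over the at most `countP` returns of `P` to `S`. -/
lemma IsPath.exists_ear_le_length (S : Set V) [DecidablePred (· ∈ S)] (N : ℕ) {x y : V}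
    {P : G.Walk x y} (hP : P.IsPath) (hx : x ∈ S) (hy : y ∈ S)
    (hlen : N * P.support.tail.countP (· ∈ S) < P.length) :
    ∃ (a b : V) (Q : G.Walk a b), Q.IsPath ∧ N ≤ Q.length ∧ a ∈ S ∧ b ∈ S ∧
      ∀ z ∈ Q.support, z ∈ S → z = a ∨ z = b := by
  induction hL : P.length using Nat.strong_induction_on generalizing x P with
  | _ L ih =>
  cases P with
  | nil => simp at hlen
  | cons h P₁ =>
  obtain ⟨z, r, s, rfl, hz, hr⟩ := exists_eq_append_of_first_mem S P₁ hy
  rw [← cons_append] at hP hlen hL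
  by_cases hN : N ≤ (cons h r).length
  · refine ⟨x, z, cons h r, hP.of_append_left, hN, hx, hz, fun w hw hwS => ?_⟩
    rcases List.mem_cons.mp hw with rfl | hw
    · exact Or.inl rfl
    · exact Or.inr (hr w hw hwS)
  have hcount : (r.support.countP (· ∈ S)) + s.support.tail.countP (· ∈ S) =
      ((cons h r).append s).support.tail.countP (· ∈ S) := by
    simp [support_append, List.countP_append]
  have hr1 : 1 ≤ r.support.countP (· ∈ S) :=
    List.countP_pos_iff.mpr ⟨z, r.end_mem_support, by simpa using hz⟩
  have hlen_eq : ((cons h r).append s).length = (cons h r).length + s.length := length_append ..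
  have hrlen : 1 ≤ (cons h r).length := by simp
  have := Nat.mul_le_mul_left N hr1
  exact ih s.length (by omega) hP.of_append_right hz (by rw [← hcount] at hlen; nlinarith) rfl

lemma IsCycle.countP_mem_support_le [DecidableEq V] {a : V} {C : G.Walk a a} (hC : C.IsCycle)
    {l : List V} (hl : l.Nodup) : l.countP (· ∈ C.support) ≤ C.length := by
  have hsub : l.filter (· ∈ C.support) ⊆ C.support.tail := fun z hz => by
    have hzC : z ∈ C.support := by simpa using (List.mem_filter.mp hz).2
    rw [← C.cons_tail_support, List.mem_cons] at hzC
    rcases hzC with rfl | hzC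
    · exact end_mem_tail_support hC.not_nil
    · exact hzC
  have := (List.subperm_of_subset (hl.filter _) hsub).length_le
  rw [List.countP_eq_length_filter]
  simpa [length_support] using this

lemma IsCycle.exists_isCycle_of_isPath {a b c u : V} {C : G.Walk c c} (hC : C.IsCycle)
    {Q : G.Walk a b} (hQ : Q.IsPath) (hQlen : 2 ≤ Q.length) (ha : a ∈ C.support)
    (hb : b ∈ C.support) (hQC : ∀ y ∈ Q.support, y ∈ C.support → y = a ∨ y = b)
    (hu : u ∈ C.support) :
    ∃ (d : V) (C' : G.Walk d d), C'.IsCycle ∧ Q.length < C'.length ∧ u ∈ C'.support ∧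
      ∀ y ∈ Q.support, y ∈ C'.support := by
  have hab : a ≠ b := by
    rintro rfl
    have := length_eq_zero_iff.mpr (isPath_iff_nil.mp hQ)
    omega
  obtain ⟨A, hA, huA, hAC⟩ := hC.exists_isPath_mem_support hb ha hu hab.symm
  refine ⟨a, Q.append A, hQ.isCycle_append hA ?_ (Or.inl hQlen), ?_,
    (mem_support_append_iff _ _).mpr (Or.inr huA),
    fun y hy => (mem_support_append_iff _ _).mpr (Or.inl hy)⟩
  · intro y hyQ hyA
    rcases hQC y (List.mem_of_mem_tail hyQ) (hAC y (List.mem_of_mem_tail hyA)) with rfl | rfl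
    · exact hQ.start_notMem_support_tail hyQ
    · exact hA.start_notMem_support_tail hyA
  · have : A.length ≠ 0 := fun h => hab (eq_of_length_eq_zero h).symm
    rw [length_append]
    omega

end Walk

open Walk

lemma exists_walk_support_subset_of_connected_induce {s : Set V}
    (hs : (G.induce s).Connected) {u w : V} (hu : u ∈ s) (hw : w ∈ s) :
    ∃ p : G.Walk u w, ∀ y ∈ p.support, y ∈ s := by
  obtain ⟨q⟩ := hs.preconnected ⟨u, hu⟩ ⟨w, hw⟩
  refine ⟨q.map (Embedding.induce s).toHom, fun y hy => ?_⟩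
  replace hy : y ∈ q.support.map (Embedding.induce (G := G) s).toHom := by
    rwa [← Walk.support_map]
  obtain ⟨⟨y, hys⟩, -, rfl⟩ := List.mem_map.mp hy
  exact hys

lemma exists_ne_ne_of_three (h3 : ∃ x y z : V, x ≠ y ∧ x ≠ z ∧ y ≠ z) (u w : V) :
    ∃ z, z ≠ u ∧ z ≠ w := by
  obtain ⟨x, y, z, hxy, hxz, hyz⟩ := h3
  by_contra! h
  rcases eq_or_ne x u with rfl | hxu
  · exact hyz ((h y hxy.symm).trans (h z hxz.symm).symm)
  rcases eq_or_ne y u with rfl | hyu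
  · exact hxz ((h x hxy).trans (h z hyz.symm).symm)
  exact hxy ((h x hxu).trans (h y hyu).symm)

lemma exists_isCycle_mem_edges (h3 : ∃ x y z : V, x ≠ y ∧ x ≠ z ∧ y ≠ z)
    (h2 : ∀ v : V, (G.induce ({v}ᶜ : Set V)).Connected) {u w : V} (h : G.Adj u w) :
    ∃ (a : V) (c : G.Walk a a), c.IsCycle ∧ s(u, w) ∈ c.edges := by
  obtain ⟨z, hzu, hzw⟩ := exists_ne_ne_of_three h3 u w
  obtain ⟨p, hp⟩ := exists_walk_support_subset_of_connected_induce (h2 w)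
    (show u ∈ ({w}ᶜ : Set V) from h.ne) (show z ∈ ({w}ᶜ : Set V) from hzw)
  obtain ⟨q, hq⟩ := exists_walk_support_subset_of_connected_induce (h2 u)
    (show z ∈ ({u}ᶜ : Set V) from hzu) (show w ∈ ({u}ᶜ : Set V) from h.ne.symm)
  refine adj_and_reachable_delete_edges_iff_exists_cycle.mp
    ⟨h, reachable_deleteEdges_iff_exists_walk.mpr ⟨p.append q, fun he => ?_⟩⟩
  rcases List.mem_append.mp (edges_append p q ▸ he) with he | he
  · exact hp w (p.snd_mem_support_of_mem_edges he) rfl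
  · exact hq u (q.fst_mem_support_of_mem_edges he) rfl

lemma exists_isCycle_of_adj_of_notMem (h2 : ∀ v : V, (G.induce ({v}ᶜ : Set V)).Connected)
    {a u v w : V} {c : G.Walk a a} (hc : c.IsCycle) (hu : u ∈ c.support) (hv : v ∈ c.support)
    (hw : w ∉ c.support) (hvw : G.Adj v w) (huv : u ≠ v) :
    ∃ (b : V) (c' : G.Walk b b), c'.IsCycle ∧ u ∈ c'.support ∧ w ∈ c'.support := by
  classical
  obtain ⟨q, hq⟩ := exists_walk_support_subset_of_connected_induce (h2 v)
    (show w ∈ ({v}ᶜ : Set V) from hvw.ne.symm) (show u ∈ ({v}ᶜ : Set V) from huv)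
  obtain ⟨x, r, s, hrs, hx, hr⟩ := exists_eq_append_of_first_mem {y | y ∈ c.support} q.bypass hu
  have hrpath : r.IsPath := (hrs ▸ q.bypass_isPath).of_append_left
  have hvr : v ∉ r.support := fun hvr => hq v (q.support_bypass_subset_support
    (hrs ▸ (mem_support_append_iff r s).mpr (Or.inl hvr))) rfl
  have hrlen : r.length ≠ 0 := fun h => hw (eq_of_length_eq_zero h ▸ hx)
  have hQc : ∀ y ∈ (cons hvw r).support, y ∈ c.support → y = v ∨ y = x := by
    intro y hy hyc
    rcases List.mem_cons.mp hy with rfl | hy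
    · exact Or.inl rfl
    · exact Or.inr (hr y hy hyc)
  obtain ⟨b, c', hc', -, huc', hQc'⟩ := hc.exists_isCycle_of_isPath (Q := cons hvw r)
    (hrpath.cons hvr) (by rw [length_cons]; omega) hv hx hQc hu
  exact ⟨b, c', hc', huc', hQc' w (by simp)⟩

lemma exists_isCycle_mem_support_of_ne (h3 : ∃ x y z : V, x ≠ y ∧ x ≠ z ∧ y ≠ z)
    (h2 : ∀ v : V, (G.induce ({v}ᶜ : Set V)).Connected) {u w : V} (huw : u ≠ w) :
    ∃ (a : V) (c : G.Walk a a), c.IsCycle ∧ u ∈ c.support ∧ w ∈ c.support := by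
  obtain ⟨z, hzu, hzw⟩ := exists_ne_ne_of_three h3 u w
  obtain ⟨p, -⟩ := exists_walk_support_subset_of_connected_induce (h2 z)
    (show w ∈ ({z}ᶜ : Set V) from hzw.symm) (show u ∈ ({z}ᶜ : Set V) from hzu.symm)
  clear hzu hzw
  induction p with
  | nil => exact absurd rfl huw
  | @cons w v u h p ih =>
    rcases eq_or_ne v u with rfl | hvu
    · obtain ⟨a, c, hc, he⟩ := exists_isCycle_mem_edges h3 h2 h
      exact ⟨a, c, hc, c.snd_mem_support_of_mem_edges he, c.fst_mem_support_of_mem_edges he⟩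
    obtain ⟨a, c, hc, huc, hvc⟩ := ih hvu.symm
    by_cases hwc : w ∈ c.support
    · exact ⟨a, c, hc, huc, hwc⟩
    exact exists_isCycle_of_adj_of_notMem h2 hc huc hvc hwc h.symm hvu.symm

lemma exists_isCycle_le_length (h3 : ∃ x y z : V, x ≠ y ∧ x ≠ z ∧ y ≠ z)
    (h2 : ∀ v : V, (G.induce ({v}ᶜ : Set V)).Connected) (hlong : ∀ k : ℕ, HasPathLen G k)
    (N : ℕ) : ∃ (a : V) (c : G.Walk a a), c.IsCycle ∧ N ≤ c.length := by
  classical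
  -- `N + 2` so that the ear found below has length at least `2`.
  obtain ⟨x, y, P, hP, hPlen⟩ := hlong ((N + 2) * (N + 2) + 1)
  have hxy : x ≠ y := by
    rintro rfl
    have := length_eq_zero_iff.mpr (isPath_iff_nil.mp hP)
    omega
  obtain ⟨a, C, hC, hxC, hyC⟩ := exists_isCycle_mem_support_of_ne h3 h2 hxy
  by_cases hCN : N + 2 ≤ C.length
  · exact ⟨a, C, hC, by omega⟩
  have hcount : P.support.tail.countP (· ∈ {z | z ∈ C.support}) ≤ C.length :=
    hC.countP_mem_support_le hP.support_nodup.tail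
  obtain ⟨b, d, Q, hQ, hQlen, hb, hd, hQC⟩ := hP.exists_ear_le_length {z | z ∈ C.support} (N + 2)
    hxC hyC (by nlinarith)
  obtain ⟨e, C', hC', hlen, -⟩ := hC.exists_isCycle_of_isPath hQ (by omega) hb hd hQC hb
  exact ⟨e, C', hC', by omega⟩

lemma isMinorOf_cycleGraph_of_isPath_of_adj {n : ℕ} {x y : V} {p : G.Walk x y} (hp : p.IsPath)
    (hyx : G.Adj y x) (hn : n ≤ p.length + 1) : IsMinorOf (cycleGraph n) G := by
  -- branch sets: `{p.getVert i}` for `i < n - 1`, and the rest of `p` for `i = n - 1`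
  set B : Fin n → Set V := fun i =>
    {v | v ∈ ((p.drop i).take (if (i : ℕ) + 1 < n then 0 else p.length)).support}
  have mem_B : ∀ i v, v ∈ B i → ∃ m : ℕ, i ≤ m ∧ m ≤ p.length ∧ ((i : ℕ) + 1 < n → m = i) ∧
      p.getVert m = v := by
    intro i v hv
    obtain ⟨m, rfl, hm⟩ := mem_support_iff_exists_getVert.mp hv
    simp only [take_getVert, drop_getVert, take_length, drop_length] at hm ⊢
    refine ⟨i + min (if (i : ℕ) + 1 < n then 0 else p.length) m, by omega, by omega, ?_, rfl⟩
    intro hi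
    simp [hi]
  have start_mem : ∀ i : Fin n, p.getVert i ∈ B i := fun i => start_mem_support _
  have end_mem : ∀ i : Fin n, ¬ (i : ℕ) + 1 < n → y ∈ B i := by
    intro i hi
    have := end_mem_support ((p.drop i).take (if (i : ℕ) + 1 < n then 0 else p.length))
    have hy : (p.drop i).getVert (if (i : ℕ) + 1 < n then 0 else p.length) = y := by
      rw [drop_getVert, if_neg hi, getVert_of_length_le _ (by omega)]
    rwa [← hy]
  refine ⟨B, fun i => ⟨_, start_mem i⟩, fun i => connected_induce_support _, ?_, ?_⟩
  · intro i j hij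
    rw [Set.disjoint_left]
    intro v hvi hvj
    obtain ⟨m, hm1, hm2, hm3, rfl⟩ := mem_B i v hvi
    obtain ⟨m', hm1', hm2', hm3', hm'⟩ := mem_B j _ hvj
    have := hp.getVert_injOn hm2' hm2 hm'
    exact hij (Fin.ext (by omega))
  have key : ∀ i j : Fin n, (j - i : Fin n).val = 1 → ∃ u ∈ B i, ∃ v ∈ B j, G.Adj u v := by
    intro i j h
    rcases le_or_gt i j with hij | hij
    · rw [Fin.coe_sub_iff_le.mpr hij] at h
      have hj : (j : ℕ) = i + 1 := by omega
      refine ⟨_, start_mem i, _, start_mem j, ?_⟩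
      rw [hj]
      exact p.adj_getVert_succ (by omega)
    · rw [Fin.coe_sub_iff_lt.mpr hij] at h
      refine ⟨y, end_mem i (by omega), x, ?_, hyx⟩
      have hj : (j : ℕ) = 0 := by omega
      simpa [hj] using start_mem j
  intro i j hij
  rcases cycleGraph_adj'.mp hij with h | h
  · obtain ⟨u, hu, v, hv, huv⟩ := key j i h
    exact ⟨v, hv, u, hu, huv.symm⟩
  · exact key i j h

lemma isMinorOf_cycleGraph_of_isCycle {n : ℕ} {a : V} {c : G.Walk a a} (hc : c.IsCycle)
    (hn : n ≤ c.length) : IsMinorOf (cycleGraph n) G := by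
  cases c with
  | nil => exact absurd hc not_isCycle_nil
  | cons h p =>
    rw [length_cons] at hn
    exact isMinorOf_cycleGraph_of_isPath_of_adj ((cons_isCycle_iff p h).mp hc).1 h hn

end SimpleGraph

theorem stmt_7_general (n : ℕ) {V : Type} (G : SimpleGraph V)
    (hcard : ∃ x y z : V, x ≠ y ∧ x ≠ z ∧ y ≠ z)
    (h2conn : ∀ v : V, (G.induce ({v}ᶜ : Set V)).Connected)
    (hlong : ∀ k : ℕ, HasPathLen G k) :
    IsMinorOf (cycleGraph n) G := by
  obtain ⟨a, c, hc, hlen⟩ := exists_isCycle_le_length hcard h2conn hlong n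
  exact isMinorOf_cycleGraph_of_isCycle hc hlen

/-- For every `n ≥ 3`, the cycle `C_n` is a minor of every 2-connected graph
containing arbitrarily long paths. -/
theorem stmt_7 (n : ℕ) (hn : 3 ≤ n) {V : Type} [Countable V] (G : SimpleGraph V)
    (hcard : ∃ x y z : V, x ≠ y ∧ x ≠ z ∧ y ≠ z)
    (h2conn : ∀ v : V, (G.induce ({v}ᶜ : Set V)).Connected)
    (hlong : ∀ k : ℕ, HasPathLen G k) :
    IsMinorOf (cycleGraph n) G :=
  stmt_7_general n G hcard h2conn hlong
end

section
/- Assuming that every finite 4-connected graph with at least f_4(k) vertices contains D_k, O_k, M_k or K_{4,k} as a minor, it follows that every finite 3-connected graph with at least f_4(k+1) − 1 vertices contains the wheel W_k or K_{3,k} as a minor. -/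
open SimpleGraph

/-- The wheel `W_k`: a cycle of length `k` (on `ZMod k`) plus a hub `none` adjacent to
all cycle vertices. -/
def wheel (k : ℕ) : SimpleGraph (Option (ZMod k)) :=
  SimpleGraph.fromRel (fun a b =>
    match a, b with
    | none, some _ => True
    | some i, some j => j = i + 1
    | _, _ => False)

/-- `D_k`: a cycle of length `k` plus two additional nonadjacent vertices each adjacent
to all cycle vertices. -/
def Dgraph (k : ℕ) : SimpleGraph (ZMod k ⊕ Fin 2) :=
  SimpleGraph.fromRel (fun a b =>
    match a, b with
    | .inl i, .inl j => j = i + 1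
    | .inl _, .inr _ => True
    | _, _ => False)

/-- `O_k`: the circular ladder on `2k` vertices. -/
def Ograph (k : ℕ) : SimpleGraph (ZMod k × ZMod 2) :=
  SimpleGraph.fromRel (fun p q =>
    (p.2 = q.2 ∧ q.1 = p.1 + 1) ∨ (p.1 = q.1 ∧ q.2 = p.2 + 1))

/-- `M_k`: the Möbius ladder on `2k` vertices. -/
def Mgraph (k : ℕ) : SimpleGraph (ZMod (2 * k)) :=
  SimpleGraph.fromRel (fun i j => j = i + 1 ∨ j = i + k)

/-- `R_2`: a ray `0, 1, 2, …` plus two nonadjacent vertices each adjacent to every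
vertex of the ray. -/
def R2 : SimpleGraph (ℕ ⊕ Fin 2) :=
  SimpleGraph.fromRel (fun a b =>
    match a, b with
    | .inl i, .inl j => j = i + 1
    | .inl _, .inr _ => True
    | _, _ => False)

/-!
As `G` is 3-connected, the cone `G⁺` is 4-connected, and it has at least `f₄ (k + 1)`
vertices, so it has a minor `H` among `D_{k+1}`, `O_{k+1}`, `M_{k+1}`, `K_{4,k+1}`. The apex of
`G⁺` lies in at most one branch set of a model of `H`; dropping that branch set leaves a model
of `H - v` in `G`. Finally each `H - v` has the required minor: `K_{4,k+1} - v` contains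
`K_{3,k}`, and in the other three graphs a hub (an apex, or an arc of a cycle) sees a path of
`k - 1` further vertices, which a small connected set touching the hub closes into the rim
of `W_k`.
-/

namespace SimpleGraph

variable {V W : Type*} {G : SimpleGraph V}

lemma induce_singleton_connected (v : V) : (G.induce {v}).Connected := by
  rw [induce_singleton_eq_top]
  exact connected_top

lemma induce_image_Icc_connected (f : ℕ → V) {a b : ℕ} (hab : a ≤ b)
    (hf : ∀ i, a ≤ i → i < b → G.Adj (f i) (f (i + 1))) :
    (G.induce (f '' Set.Icc a b)).Connected := by
  induction b, hab using Nat.le_induction with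
  | base =>
    rw [Set.Icc_self, Set.image_singleton]
    exact induce_singleton_connected (f a)
  | succ b hab ih =>
    rw [← Order.succ_eq_add_one, ← Set.insert_Icc_right_eq_Icc_succ (by simp; omega),
      Set.image_insert_eq, Set.insert_eq, Set.union_comm]
    exact connected_induce_union (ih fun i hi hib => hf i hi (by omega)).preconnected
      (induce_singleton_connected _).preconnected ⟨b, ⟨hab, le_rfl⟩, rfl⟩ rfl
      (hf b hab (by omega))

lemma induce_triple_connected {x y z : V} (hxy : G.Adj x y) (hyz : G.Adj y z) :
    (G.induce {x, y, z}).Connected := by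
  rw [← Set.singleton_union]
  exact connected_induce_union (induce_singleton_connected x).preconnected
    (induce_pair_connected_of_adj hyz).preconnected rfl (Set.mem_insert y _) hxy

lemma induce_iUnion_connected {ι : Type*} {F : SimpleGraph ι} (hF : F.Connected) {B : ι → Set V}
    (hB : ∀ i, (G.induce (B i)).Connected)
    (hadj : ∀ ⦃i j⦄, F.Adj i j → ∃ u ∈ B i, ∃ v ∈ B j, G.Adj u v) :
    (G.induce (⋃ i, B i)).Connected := by
  have hsub i : B i ⊆ ⋃ i, B i := Set.subset_iUnion B i
  have hreach : ∀ {i j} (_ : F.Walk i j) (x : B i) (y : B j),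
      (G.induce (⋃ i, B i)).Reachable ⟨x, hsub i x.2⟩ ⟨y, hsub j y.2⟩ := by
    intro i j w
    induction w with
    | nil => exact fun x y => ((hB _).preconnected x y).map (induceHomOfLE _ (hsub _)).toHom
    | cons h _ ih =>
      intro x y
      obtain ⟨u, hu, v, hv, huv⟩ := hadj h
      exact (((hB _).preconnected x ⟨u, hu⟩).map (induceHomOfLE _ (hsub _)).toHom).trans
        ((Adj.reachable (G := G.induce (⋃ i, B i)) (u := ⟨u, hsub _ hu⟩) (v := ⟨v, hsub _ hv⟩)
          huv).trans (ih ⟨v, hv⟩ y))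
  obtain ⟨i⟩ := hF.nonempty
  obtain ⟨x, hx⟩ := (hB i).nonempty
  have : Nonempty (⋃ i, B i : Set V) := ⟨⟨x, hsub i hx⟩⟩
  refine ⟨fun ⟨x, hx⟩ ⟨y, hy⟩ => ?_⟩
  obtain ⟨i, hxi⟩ := Set.mem_iUnion.mp hx
  obtain ⟨j, hyj⟩ := Set.mem_iUnion.mp hy
  exact hreach (hF.preconnected i j).some ⟨x, hxi⟩ ⟨y, hyj⟩

lemma Embedding.induce_preimage_connected_iff {G' : SimpleGraph W} (f : G ↪g G') {s : Set W}
    (hs : s ⊆ Set.range f) :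
    (G.induce (f ⁻¹' s)).Connected ↔ (G'.induce s).Connected := by
  let e : G.induce (f ⁻¹' s) ↪g G'.induce s :=
    { toFun := fun v => ⟨f v, v.2⟩
      inj' := fun v w h => Subtype.ext (f.injective (congrArg Subtype.val h))
      map_rel_iff' := f.map_adj_iff }
  have he : Function.Surjective e := by
    rintro ⟨w, hw⟩
    obtain ⟨v, rfl⟩ := hs hw
    exact ⟨⟨v, hw⟩, rfl⟩
  exact Iso.connected_iff (RelIso.ofSurjective e he)

end SimpleGraph

section Minor

variable {V W U : Type*} {G : SimpleGraph V} {H : SimpleGraph W} {K : SimpleGraph U}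

lemma IsMinorOf.trans (hKH : IsMinorOf K H) (hHG : IsMinorOf H G) : IsMinorOf K G := by
  obtain ⟨C, hCne, hCconn, hCdisj, hCadj⟩ := hKH
  obtain ⟨B, hBne, hBconn, hBdisj, hBadj⟩ := hHG
  refine ⟨fun u => ⋃ t : C u, B t, fun u => ?_, fun u => ?_, fun u u' huu' => ?_, fun u u' h => ?_⟩
  · obtain ⟨t, ht⟩ := hCne u
    exact (hBne t).mono (Set.subset_iUnion_of_subset ⟨t, ht⟩ le_rfl)
  · exact induce_iUnion_connected (hCconn u) (fun t => hBconn t) fun t t' h => hBadj h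
  · refine Set.disjoint_iUnion_left.mpr fun t => Set.disjoint_iUnion_right.mpr fun t' => ?_
    exact hBdisj fun h => Set.disjoint_left.mp (hCdisj huu') t.2 (h ▸ t'.2)
  · obtain ⟨t, ht, t', ht', htt'⟩ := hCadj h
    obtain ⟨x, hx, y, hy, hxy⟩ := hBadj htt'
    exact ⟨x, Set.mem_iUnion_of_mem ⟨t, ht⟩ hx, y, Set.mem_iUnion_of_mem ⟨t', ht'⟩ hy, hxy⟩

lemma IsModelOf.isMinorOf_induce {C : U → Set W} (hC : IsModelOf H K C) {s : Set W}
    (hs : ∀ u, C u ⊆ s) : IsMinorOf K (H.induce s) := by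
  obtain ⟨hne, hconn, hdisj, hadj⟩ := hC
  have hrange u : C u ⊆ Set.range (Embedding.induce s : H.induce s ↪g H) := fun x hx =>
    ⟨⟨x, hs u hx⟩, rfl⟩
  refine ⟨fun u => Subtype.val ⁻¹' C u, fun u => ?_, fun u => ?_, fun u u' h => ?_,
    fun u u' h => ?_⟩
  · obtain ⟨x, hx⟩ := hne u
    exact ⟨⟨x, hs u hx⟩, hx⟩
  · exact ((Embedding.induce s).induce_preimage_connected_iff (hrange u)).mpr (hconn u)
  · exact (hdisj h).preimage _
  · obtain ⟨x, hx, y, hy, hxy⟩ := hadj h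
    exact ⟨⟨x, hs u hx⟩, hx, ⟨y, hs u' hy⟩, hy, hxy⟩

lemma Embedding.isModelOf_singleton (f : K ↪g H) : IsModelOf H K fun u => {f u} :=
  ⟨fun _ => Set.singleton_nonempty _, fun _ => induce_singleton_connected _,
    fun _ _ h => Set.disjoint_singleton.mpr (f.injective.ne h),
    fun _ _ h => ⟨_, rfl, _, rfl, f.map_adj_iff.mpr h⟩⟩

end Minor

namespace SimpleGraph

variable {V W : Type*} (G : SimpleGraph V)

/-- The graph `G⁺` of the paper, with apex `none`. -/
def cone : SimpleGraph (Option V) where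
  Adj a b := match a, b with
    | none, none => False
    | none, some _ => True
    | some _, none => True
    | some u, some v => G.Adj u v
  symm := ⟨by rintro (_ | u) (_ | v) h <;> first | trivial | exact h.symm⟩
  loopless := ⟨by rintro (_ | u) h <;> first | exact h | exact G.irrefl h⟩

def coneEmbedding : G ↪g G.cone where
  toEmbedding := ⟨some, Option.some_injective V⟩
  map_rel_iff' := Iff.rfl

variable {G}

lemma cone_adj_none (v : V) : G.cone.Adj none (some v) := trivial

lemma range_coneEmbedding : Set.range G.coneEmbedding = {none}ᶜ := by
  ext (_ | v)
  · simp [coneEmbedding]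
  · exact ⟨fun _ => Option.some_ne_none v, fun _ => ⟨v, rfl⟩⟩

lemma cone_induce_connected_of_mem {s : Set (Option V)} (hs : none ∈ s) :
    (G.cone.induce s).Connected := by
  have hnone (x : s) : (G.cone.induce s).Reachable x ⟨none, hs⟩ := by
    obtain ⟨_ | v, hv⟩ := x
    · rfl
    · exact Adj.reachable (G := G.cone.induce s) (cone_adj_none (G := G) v).symm
  have : Nonempty s := ⟨⟨none, hs⟩⟩
  exact ⟨fun x y => (hnone x).trans (hnone y).symm⟩

lemma KConnected.cone {k : ℕ} (hG : KConnected G k) : KConnected G.cone (k + 1) := by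
  obtain ⟨hcard, hconn⟩ := hG
  refine ⟨?_, fun s hs hsk => ?_⟩
  · rcases hcard with hcard | hinf
    · have : Finite V := Nat.finite_of_card_ne_zero (by omega)
      rw [Finite.card_option]
      exact Or.inl (by omega)
    · exact Or.inr inferInstance
  by_cases hnone : none ∈ s
  · have hsub : sᶜ ⊆ Set.range G.coneEmbedding := by
      rw [range_coneEmbedding]
      exact Set.compl_subset_compl.mpr (Set.singleton_subset_iff.mpr hnone)
    rw [← G.coneEmbedding.induce_preimage_connected_iff hsub, Set.preimage_compl]
    refine hconn _ (hs.preimage (Option.some_injective V).injOn) ?_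
    have : (G.coneEmbedding ⁻¹' s).ncard + 1 = s.ncard := by
      rw [← Set.ncard_image_of_injective _ G.coneEmbedding.injective,
        Set.image_preimage_eq_inter_range, range_coneEmbedding, ← Set.sdiff_eq]
      exact Set.ncard_sdiff_singleton_add_one hnone hs
    omega
  · exact cone_induce_connected_of_mem hnone

end SimpleGraph

lemma IsMinorOf.exists_induce_compl_of_cone {V W : Type*} {G : SimpleGraph V}
    {H : SimpleGraph W} [Nonempty W] (h : IsMinorOf H G.cone) :
    ∃ w, IsMinorOf (H.induce {w}ᶜ) G := by
  obtain ⟨B, hne, hconn, hdisj, hadj⟩ := h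
  obtain ⟨w, hw⟩ : ∃ w, ∀ t ≠ w, none ∉ B t := by
    by_cases hex : ∃ w, none ∈ B w
    · obtain ⟨w, hw⟩ := hex
      exact ⟨w, fun t ht hn => Set.disjoint_left.mp (hdisj ht) hn hw⟩
    · simp only [not_exists] at hex
      exact ⟨Classical.arbitrary W, fun t _ => hex t⟩
  have hrange (t : ({w}ᶜ : Set W)) : B t ⊆ Set.range G.coneEmbedding := by
    rw [range_coneEmbedding]
    exact fun x hx (hxn : x = none) => hw t t.2 (hxn ▸ hx)
  refine ⟨w, fun t => G.coneEmbedding ⁻¹' B t, fun t => ?_, fun t => ?_, fun t t' htt' => ?_,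
    fun t t' h => ?_⟩
  · obtain ⟨x, hx⟩ := hne t
    obtain ⟨v, rfl⟩ := hrange t hx
    exact ⟨v, hx⟩
  · exact (G.coneEmbedding.induce_preimage_connected_iff (hrange t)).mpr (hconn t)
  · exact (hdisj (Subtype.coe_injective.ne htt')).preimage _
  · obtain ⟨x, hx, y, hy, hxy⟩ := hadj h
    obtain ⟨u, rfl⟩ := hrange t hx
    obtain ⟨v, rfl⟩ := hrange t' hy
    exact ⟨u, hx, v, hy, hxy⟩

def SimpleGraph.completeBipartiteGraphEmbedding {V₁ V₂ W₁ W₂ : Type*} (f : V₁ ↪ V₂)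
    (g : W₁ ↪ W₂) : completeBipartiteGraph V₁ W₁ ↪g completeBipartiteGraph V₂ W₂ where
  __ := f.sumMap g
  map_rel_iff' := by rintro (_ | _) (_ | _) <;> simp

lemma completeBipartiteGraph_isMinorOf_induce_compl {a b : ℕ} (v : Fin (a + 1) ⊕ Fin (b + 1)) :
    IsMinorOf (completeBipartiteGraph (Fin a) (Fin b))
      ((completeBipartiteGraph (Fin (a + 1)) (Fin (b + 1))).induce {v}ᶜ) := by
  obtain ⟨f, g, hv⟩ : ∃ (f : Fin a ↪ Fin (a + 1)) (g : Fin b ↪ Fin (b + 1)),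
      ∀ u, Sum.map f g u ≠ v := by
    rcases v with i | j
    · exact ⟨i.succAboveEmb, Fin.castSuccEmb, by rintro (u | u) <;> simp [Fin.succAbove_ne]⟩
    · exact ⟨Fin.castSuccEmb, j.succAboveEmb, by rintro (u | u) <;> simp [Fin.succAbove_ne]⟩
  exact (Embedding.isModelOf_singleton (completeBipartiteGraphEmbedding f g)).isMinorOf_induce
    fun u => Set.singleton_subset_iff.mpr (hv u)

lemma ZMod.add_natCast_add_natCast_of_add_eq {N i j : ℕ} (m : ZMod N) (h : i + j = N) :
    m + (i : ZMod N) + (j : ZMod N) = m := by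
  rw [add_assoc, ← Nat.cast_add, h, ZMod.natCast_self, add_zero]

lemma ZMod.add_one_ne_self {N : ℕ} [Fact (1 < N)] (i : ZMod N) : i + 1 ≠ i :=
  add_ne_left.mpr one_ne_zero

lemma ZMod.val_add_one_of_lt {k : ℕ} [NeZero k] (hk : k ≠ 1) {i : ZMod k} (hi : i.val + 1 < k) :
    (i + 1).val = i.val + 1 := by
  rw [ZMod.val_add, ZMod.val_one'' hk, Nat.mod_eq_of_lt hi]

lemma ZMod.val_add_one_of_eq {k : ℕ} [NeZero k] (hk : k ≠ 1) {i : ZMod k} (hi : i.val + 1 = k) :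
    (i + 1).val = 0 := by
  rw [ZMod.val_add, ZMod.val_one'' hk, hi, Nat.mod_self]

lemma wheel_adj_some {k : ℕ} {i j : ZMod k} :
    (wheel k).Adj (some i) (some j) ↔ i ≠ j ∧ (j = i + 1 ∨ i = j + 1) := by
  simp [wheel]

lemma isModelOf_wheel {T : Type*} {H : SimpleGraph T} {k : ℕ} (hk : 2 ≤ k) {X : Set T}
    {r : ℕ → Set T} (hX : (H.induce X).Connected) (hr : ∀ i < k, (H.induce (r i)).Connected)
    (hXr : ∀ i < k, Disjoint X (r i)) (hrr : ∀ i < k, ∀ j < k, i ≠ j → Disjoint (r i) (r j))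
    (hspoke : ∀ i < k, ∃ x ∈ X, ∃ y ∈ r i, H.Adj x y)
    (hsucc : ∀ i, i + 1 < k → ∃ x ∈ r i, ∃ y ∈ r (i + 1), H.Adj x y)
    (hwrap : ∃ x ∈ r (k - 1), ∃ y ∈ r 0, H.Adj x y) :
    IsModelOf H (wheel k) fun w => w.elim X fun j => r j.val := by
  have : NeZero k := ⟨by omega⟩
  have rim_succ (i j : ZMod k) (hij : j = i + 1) : ∃ x ∈ r i.val, ∃ y ∈ r j.val, H.Adj x y := by
    have hi := ZMod.val_lt i
    subst hij
    by_cases hlt : i.val + 1 < k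
    · rw [ZMod.val_add_one_of_lt (by omega) hlt]
      exact hsucc _ hlt
    · rw [ZMod.val_add_one_of_eq (by omega) (by omega), show i.val = k - 1 by omega]
      exact hwrap
  refine ⟨?_, ?_, ?_, ?_⟩
  · rintro (_ | j)
    exacts [Set.nonempty_coe_sort.mp hX.nonempty,
      Set.nonempty_coe_sort.mp (hr _ (ZMod.val_lt j)).nonempty]
  · rintro (_ | j)
    exacts [hX, hr _ (ZMod.val_lt j)]
  · rintro (_ | i) (_ | j) hij
    · exact absurd rfl hij
    · exact hXr _ (ZMod.val_lt j)
    · exact (hXr _ (ZMod.val_lt i)).symm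
    · exact hrr _ (ZMod.val_lt i) _ (ZMod.val_lt j)
        fun h => hij (congrArg some (ZMod.val_injective k h))
  · rintro (_ | i) (_ | j) hij
    · exact absurd hij (wheel k).irrefl
    · exact hspoke _ (ZMod.val_lt j)
    · obtain ⟨x, hx, y, hy, hxy⟩ := hspoke _ (ZMod.val_lt i)
      exact ⟨y, hy, x, hx, hxy.symm⟩
    · rcases (wheel_adj_some.mp hij).2 with h | h
      · exact rim_succ i j h
      · obtain ⟨x, hx, y, hy, hxy⟩ := rim_succ j i h
        exact ⟨y, hy, x, hx, hxy.symm⟩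

/-- The rim of the wheel is the path `p 0, …, p (k - 2)` closed up by the connected set `Z`;
the hub is the connected set `X`. -/
lemma isMinorOf_wheel_of_fan {T : Type*} {H : SimpleGraph T} {k : ℕ} (hk : 2 ≤ k)
    {s X Z : Set T} {p : ℕ → T}
    (hX : (H.induce X).Connected) (hZ : (H.induce Z).Connected)
    (hXs : X ⊆ s) (hZs : Z ⊆ s) (hps : ∀ i < k - 1, p i ∈ s)
    (hXZ : Disjoint X Z) (hpX : ∀ i < k - 1, p i ∉ X) (hpZ : ∀ i < k - 1, p i ∉ Z)
    (hp_inj : Set.InjOn p (Set.Iio (k - 1)))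
    (hp_adj : ∀ i, i + 1 < k - 1 → H.Adj (p i) (p (i + 1)))
    (hZp_first : ∃ z ∈ Z, H.Adj z (p 0)) (hZp_last : ∃ z ∈ Z, H.Adj (p (k - 2)) z)
    (hXp : ∀ i < k - 1, ∃ x ∈ X, H.Adj x (p i)) (hXZ_adj : ∃ x ∈ X, ∃ z ∈ Z, H.Adj x z) :
    IsMinorOf (wheel k) (H.induce s) := by
  set r : ℕ → Set T := fun i => if i < k - 1 then {p i} else Z
  have r_lt {i} (hi : i < k - 1) : r i = {p i} := if_pos hi
  have r_ge {i} (hi : k - 1 ≤ i) : r i = Z := if_neg (by omega)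
  have r_cases i : (i < k - 1 ∧ r i = {p i}) ∨ (k - 1 ≤ i ∧ r i = Z) := by
    by_cases hi : i < k - 1
    · exact Or.inl ⟨hi, r_lt hi⟩
    · exact Or.inr ⟨by omega, r_ge (by omega)⟩
  refine IsModelOf.isMinorOf_induce (isModelOf_wheel hk hX (r := r) (fun i _ => ?_) (fun i _ => ?_)
    (fun i _ j _ hij => ?_) (fun i _ => ?_) (fun i hi => ?_) ?_) ?_
  · rcases r_cases i with ⟨_, h⟩ | ⟨_, h⟩ <;> rw [h]
    exacts [induce_singleton_connected _, hZ]
  · rcases r_cases i with ⟨hi, h⟩ | ⟨_, h⟩ <;> rw [h]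
    exacts [Set.disjoint_singleton_right.mpr (hpX i hi), hXZ]
  · rcases r_cases i with ⟨hi, h⟩ | ⟨hi, h⟩ <;>
      rcases r_cases j with ⟨hj, h'⟩ | ⟨hj, h'⟩ <;> rw [h, h']
    · exact Set.disjoint_singleton.mpr fun h => hij (hp_inj hi hj h)
    · exact Set.disjoint_singleton_left.mpr (hpZ _ hi)
    · exact Set.disjoint_singleton_right.mpr (hpZ _ hj)
    · omega
  · rcases r_cases i with ⟨hi, h⟩ | ⟨_, h⟩ <;> rw [h]
    · obtain ⟨x, hx, hxp⟩ := hXp i hi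
      exact ⟨x, hx, _, rfl, hxp⟩
    · exact hXZ_adj
  · by_cases hlt : i + 1 < k - 1
    · rw [r_lt (by omega), r_lt hlt]
      exact ⟨_, rfl, _, rfl, hp_adj _ hlt⟩
    · obtain ⟨z, hz, hpz⟩ := hZp_last
      rw [r_lt (by omega), r_ge (by omega), show i = k - 2 by omega]
      exact ⟨_, rfl, z, hz, hpz⟩
  · obtain ⟨z, hz, hzp⟩ := hZp_first
    rw [r_ge le_rfl, r_lt (by omega)]
    exact ⟨z, hz, _, rfl, hzp⟩
  · rintro (_ | j)
    · exact hXs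
    · rcases r_cases j.val with ⟨hj, h⟩ | ⟨_, h⟩ <;> simp only [Option.elim_some, h]
      exacts [Set.singleton_subset_iff.mpr (hps _ hj), hZs]

namespace SimpleGraph

variable {V : Type*} {G : SimpleGraph V}

structure IsCyclicSeq (G : SimpleGraph V) (N : ℕ) (a : ℕ → V) : Prop where
  adj : ∀ n, G.Adj (a n) (a (n + 1))
  injOn : Set.InjOn a (Set.Iio N)
  periodic : Function.Periodic a N

namespace IsCyclicSeq

variable {N : ℕ} {a : ℕ → V}

lemma adj_of_eq (h : G.IsCyclicSeq N a) {i j : ℕ} (hij : j = i + 1) : G.Adj (a i) (a j) :=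
  hij ▸ h.adj i

lemma adj_wrap (h : G.IsCyclicSeq N a) {i j : ℕ} (hij : i + 1 = j + N) : G.Adj (a i) (a j) := by
  rw [← h.periodic j]
  exact h.adj_of_eq hij.symm

lemma ne (h : G.IsCyclicSeq N a) {i j : ℕ} (hi : i < N) (hj : j < N) (hij : i ≠ j) :
    a i ≠ a j :=
  fun h' => hij (h.injOn hi hj h')

lemma of_zmod {f : ZMod N → V} (hf : Function.Injective f) (hadj : ∀ i, G.Adj (f i) (f (i + 1)))
    (m : ZMod N) : G.IsCyclicSeq N fun n => f (m + n) where
  adj n := by simpa [add_assoc] using hadj (m + n)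
  injOn x hx y hy h := by
    have := add_left_cancel (hf h)
    rwa [ZMod.natCast_eq_natCast_iff', Nat.mod_eq_of_lt hx, Nat.mod_eq_of_lt hy] at this
  periodic n := by simp

end IsCyclicSeq

end SimpleGraph

section Dgraph
variable {N : ℕ}

@[simp] lemma Dgraph_adj_inl_inr (i : ZMod N) (b : Fin 2) : (Dgraph N).Adj (.inl i) (.inr b) := by
  simp [Dgraph]

@[simp] lemma Dgraph_adj_inr_inl (i : ZMod N) (b : Fin 2) : (Dgraph N).Adj (.inr b) (.inl i) :=
  (Dgraph_adj_inl_inr i b).symm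

lemma Dgraph_adj_inl_add_one [Fact (1 < N)] (i : ZMod N) :
    (Dgraph N).Adj (.inl i) (.inl (i + 1)) := by
  simp [Dgraph, (ZMod.add_one_ne_self i).symm]

end Dgraph

lemma wheel_isMinorOf_Dgraph_induce_compl {k : ℕ} (hk : 3 ≤ k) (v : ZMod (k + 1) ⊕ Fin 2) :
    IsMinorOf (wheel k) ((Dgraph (k + 1)).induce {v}ᶜ) := by
  have : Fact (1 < k + 1) := ⟨by omega⟩
  have cycle (m : ZMod (k + 1)) :=
    IsCyclicSeq.of_zmod (G := Dgraph (k + 1)) Sum.inl_injective Dgraph_adj_inl_add_one m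
  rcases v with m | b
  · set a : ℕ → ZMod (k + 1) ⊕ Fin 2 := fun n => .inl (m + (1 : ℕ) + n)
    have ha : (Dgraph (k + 1)).IsCyclicSeq (k + 1) a := cycle _
    rw [show Sum.inl m = a k from
      congrArg Sum.inl (ZMod.add_natCast_add_natCast_of_add_eq m (by omega)).symm]
    refine isMinorOf_wheel_of_fan (by omega) (X := {.inr 0}) (Z := {a (k - 1), .inr 1}) (p := a)
      (induce_singleton_connected _) (induce_pair_connected_of_adj (Dgraph_adj_inl_inr _ _))
      (by simp [a])
      (Set.insert_subset_iff.mpr ⟨ha.ne (by omega) (by omega) (by omega), by simp [a]⟩)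
      (fun i _ => ha.ne (by omega) (by omega) (by omega)) (by simp [a]) (fun i _ => by simp [a])
      (fun i _ => ?_) (ha.injOn.mono (Set.Iio_subset_Iio (by omega))) (fun i _ => ha.adj i)
      ⟨.inr 1, by simp, by simp [a]⟩ ⟨a (k - 1), by simp, ha.adj_of_eq (by omega)⟩
      (fun i _ => ⟨.inr 0, rfl, Dgraph_adj_inr_inl _ _⟩)
      ⟨.inr 0, rfl, a (k - 1), by simp, by simp [a]⟩
    simp only [Set.mem_insert_iff, Set.mem_singleton_iff, not_or]
    exact ⟨ha.ne (by omega) (by omega) (by omega), by simp [a]⟩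
  · obtain ⟨b', hb'⟩ := exists_ne b
    set a : ℕ → ZMod (k + 1) ⊕ Fin 2 := fun n => .inl (0 + n)
    have ha : (Dgraph (k + 1)).IsCyclicSeq (k + 1) a := cycle 0
    refine isMinorOf_wheel_of_fan (by omega) (X := {.inr b'}) (Z := {a (k - 1), a k}) (p := a)
      (induce_singleton_connected _) (induce_pair_connected_of_adj (ha.adj_of_eq (by omega)))
      (by simp [hb'.symm]) (by simp [a]) (fun i _ => by simp [a]) (by simp [a])
      (fun i _ => by simp [a]) (fun i _ => ?_) (ha.injOn.mono (Set.Iio_subset_Iio (by omega)))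
      (fun i _ => ha.adj i) ⟨a k, by simp, ha.adj_wrap (by omega)⟩
      ⟨a (k - 1), by simp, ha.adj_of_eq (by omega)⟩
      (fun i _ => ⟨.inr b', rfl, Dgraph_adj_inr_inl _ _⟩) ⟨.inr b', rfl, a k, by simp, by simp [a]⟩
    simp only [Set.mem_insert_iff, Set.mem_singleton_iff, not_or]
    exact ⟨ha.ne (by omega) (by omega) (by omega), ha.ne (by omega) (by omega) (by omega)⟩

section Ograph
variable {N : ℕ}

lemma Ograph_adj_add_one_fst [Fact (1 < N)] (i : ZMod N) (t : ZMod 2) :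
    (Ograph N).Adj (i, t) (i + 1, t) := by
  simp [Ograph, (ZMod.add_one_ne_self i).symm]

lemma Ograph_adj_add_one_snd (i : ZMod N) (t : ZMod 2) : (Ograph N).Adj (i, t) (i, t + 1) := by
  simp [Ograph, (ZMod.add_one_ne_self t).symm]

end Ograph

lemma wheel_isMinorOf_Ograph_induce_compl {k : ℕ} (hk : 3 ≤ k) (v : ZMod (k + 1) × ZMod 2) :
    IsMinorOf (wheel k) ((Ograph (k + 1)).induce {v}ᶜ) := by
  have : Fact (1 < k + 1) := ⟨by omega⟩
  obtain ⟨m, t⟩ := v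
  set f : ℕ → ZMod (k + 1) × ZMod 2 := fun n => (m + (1 : ℕ) + n, t)
  set g : ℕ → ZMod (k + 1) × ZMod 2 := fun n => (m + (1 : ℕ) + n, t + 1)
  have hf : (Ograph (k + 1)).IsCyclicSeq (k + 1) f :=
    .of_zmod (Prod.mk_left_injective t) (Ograph_adj_add_one_fst · t) _
  have hg : (Ograph (k + 1)).IsCyclicSeq (k + 1) g :=
    .of_zmod (Prod.mk_left_injective (t + 1)) (Ograph_adj_add_one_fst · (t + 1)) _
  have hgf x y : g x ≠ f y := fun h => ZMod.add_one_ne_self t (congrArg Prod.snd h)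
  have hfg n : (Ograph (k + 1)).Adj (f n) (g n) := Ograph_adj_add_one_snd _ t
  rw [show (m, t) = f k from
    Prod.ext (ZMod.add_natCast_add_natCast_of_add_eq m (by omega)).symm rfl]
  refine isMinorOf_wheel_of_fan (by omega) (X := f '' Set.Icc 0 (k - 1)) (Z := {g (k - 1), g k})
    (p := g) (induce_image_Icc_connected f (by omega) fun i _ _ => hf.adj i)
    (induce_pair_connected_of_adj (hg.adj_of_eq (by omega))) ?_
    (Set.insert_subset_iff.mpr ⟨hgf _ _, Set.singleton_subset_iff.mpr (hgf _ _)⟩)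
    (fun i _ => hgf _ _) ?_ (fun i _ ⟨j, _, h⟩ => hgf _ _ h.symm) (fun i _ => ?_)
    (hg.injOn.mono (Set.Iio_subset_Iio (by omega))) (fun i _ => hg.adj i)
    ⟨g k, by simp, hg.adj_wrap (by omega)⟩ ⟨g (k - 1), by simp, hg.adj_of_eq (by omega)⟩
    (fun i hi => ⟨f i, ⟨i, ⟨Nat.zero_le i, by omega⟩, rfl⟩, hfg i⟩)
    ⟨f (k - 1), ⟨k - 1, ⟨Nat.zero_le _, le_rfl⟩, rfl⟩, g (k - 1), by simp, hfg _⟩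
  · rintro _ ⟨j, hj, rfl⟩
    exact hf.ne (by have := hj.2; omega) (by omega) (by have := hj.2; omega)
  · rw [Set.disjoint_left]
    rintro _ ⟨j, _, rfl⟩ (h | h)
    exacts [hgf _ _ h.symm, hgf _ _ h.symm]
  · simp only [Set.mem_insert_iff, Set.mem_singleton_iff, not_or]
    exact ⟨hg.ne (by omega) (by omega) (by omega), hg.ne (by omega) (by omega) (by omega)⟩

section Mgraph
variable {N : ℕ}

lemma Mgraph_adj_add_one [Fact (1 < 2 * N)] (i : ZMod (2 * N)) : (Mgraph N).Adj i (i + 1) := by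
  simp [Mgraph, (ZMod.add_one_ne_self i).symm]

lemma Mgraph_adj_add_self (hN : 0 < N) (i : ZMod (2 * N)) : (Mgraph N).Adj i (i + N) := by
  have hN0 : (N : ZMod (2 * N)) ≠ 0 := by
    rw [Ne, ZMod.natCast_eq_zero_iff]
    exact fun h => by have := Nat.le_of_dvd hN h; omega
  simp [Mgraph, hN0]

end Mgraph

lemma wheel_isMinorOf_Mgraph_induce_compl {k : ℕ} (hk : 3 ≤ k) (v : ZMod (2 * (k + 1))) :
    IsMinorOf (wheel k) ((Mgraph (k + 1)).induce {v}ᶜ) := by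
  have : Fact (1 < 2 * (k + 1)) := ⟨by omega⟩
  set a : ℕ → ZMod (2 * (k + 1)) := fun n => v + (2 : ℕ) + n
  have ha : (Mgraph (k + 1)).IsCyclicSeq (2 * (k + 1)) a :=
    .of_zmod Function.injective_id Mgraph_adj_add_one _
  have hrung i j (hij : j = i + (k + 1)) : (Mgraph (k + 1)).Adj (a i) (a j) := by
    subst hij
    simpa [a, add_assoc] using Mgraph_adj_add_self (Nat.succ_pos k) (a i)
  rw [show v = a (2 * k) from (ZMod.add_natCast_add_natCast_of_add_eq v (by omega)).symm]
  refine isMinorOf_wheel_of_fan (by omega) (X := a '' Set.Icc (k + 1) (2 * k - 1))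
    (Z := {a (k - 1), a k, a (2 * k + 1)}) (p := a)
    (induce_image_Icc_connected a (by omega) fun i _ _ => ha.adj i)
    (induce_triple_connected (ha.adj_of_eq (by omega)) (hrung _ _ (by omega))) ?_ ?_
    (fun i _ => ha.ne (by omega) (by omega) (by omega)) ?_ ?_ ?_
    (ha.injOn.mono (Set.Iio_subset_Iio (by omega))) (fun i _ => ha.adj i)
    ⟨a (2 * k + 1), by simp, ha.adj_wrap (by omega)⟩
    ⟨a (k - 1), by simp, ha.adj_of_eq (by omega)⟩
    (fun i _ => ⟨a (i + (k + 1)), ⟨_, ⟨by omega, by omega⟩, rfl⟩, (hrung _ _ rfl).symm⟩)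
    ⟨a (k + 1), ⟨_, ⟨le_rfl, by omega⟩, rfl⟩, a k, by simp, (ha.adj k).symm⟩
  · rintro _ ⟨j, hj, rfl⟩
    exact ha.ne (by have := hj.2; omega) (by omega) (by have := hj.2; omega)
  · simp only [Set.insert_subset_iff, Set.singleton_subset_iff, Set.mem_compl_singleton_iff]
    exact ⟨ha.ne (by omega) (by omega) (by omega), ha.ne (by omega) (by omega) (by omega),
      ha.ne (by omega) (by omega) (by omega)⟩
  · rw [Set.disjoint_left]
    rintro _ ⟨j, ⟨hj1, hj2⟩, rfl⟩ (h | h | h) <;> exact ha.ne (by omega) (by omega) (by omega) h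
  · rintro i hi ⟨j, ⟨hj1, hj2⟩, h⟩
    exact ha.ne (by omega) (by omega) (by omega) h.symm
  · intro i hi
    simp only [Set.mem_insert_iff, Set.mem_singleton_iff, not_or]
    exact ⟨ha.ne (by omega) (by omega) (by omega), ha.ne (by omega) (by omega) (by omega),
      ha.ne (by omega) (by omega) (by omega)⟩

/-- Assuming every finite 4-connected graph with at least `f₄ j` vertices contains
`D_j`, `O_j`, `M_j` or `K_{4,j}` as a minor (for all `j ≥ 3`), every finite 3-connected
graph with at least `f₄ (k+1) − 1` vertices contains `W_k` or `K_{3,k}` as a minor. -/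
theorem stmt_13 (f4 : ℕ → ℕ) (k : ℕ) (hk : 3 ≤ k)
    (h4 : ∀ (j : ℕ), 3 ≤ j → ∀ (V : Type) [Fintype V] (G : SimpleGraph V),
      KConnected G 4 → f4 j ≤ Fintype.card V →
        IsMinorOf (Dgraph j) G ∨ IsMinorOf (Ograph j) G ∨ IsMinorOf (Mgraph j) G ∨
          IsMinorOf (completeBipartiteGraph (Fin 4) (Fin j)) G) :
    ∀ (V : Type) [Fintype V] (G : SimpleGraph V),
      KConnected G 3 → f4 (k + 1) - 1 ≤ Fintype.card V →
        IsMinorOf (wheel k) G ∨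
          IsMinorOf (completeBipartiteGraph (Fin 3) (Fin k)) G := by
  intro V _ G hG hcard
  have hcard' : f4 (k + 1) ≤ Fintype.card (Option V) := by
    rw [Fintype.card_option]
    omega
  rcases h4 (k + 1) (by omega) _ G.cone hG.cone hcard' with hD | hO | hM | hK
  · obtain ⟨v, hv⟩ := hD.exists_induce_compl_of_cone
    exact .inl ((wheel_isMinorOf_Dgraph_induce_compl hk v).trans hv)
  · obtain ⟨v, hv⟩ := hO.exists_induce_compl_of_cone
    exact .inl ((wheel_isMinorOf_Ograph_induce_compl hk v).trans hv)
  · obtain ⟨v, hv⟩ := hM.exists_induce_compl_of_cone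
    exact .inl ((wheel_isMinorOf_Mgraph_induce_compl hk v).trans hv)
  · obtain ⟨v, hv⟩ := hK.exists_induce_compl_of_cone
    exact .inr ((completeBipartiteGraph_isMinorOf_induce_compl v).trans hv)
end
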